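/- arXiv:1501.04806 — 4 statements merged into one kernel-verified Lean document; each statement's English description precedes it below -/
import Mathlib

section
/- Let ν ∈ (0,1), γ > -ν, λ ∈ ℝ, and define f(t) = 1 + Σ_{k=1}^∞ (λ t^{ν+γ})^k ∏_{j=0}^{k-1} Γ(νj + γj + γ + 1)/Γ(νj + γj + γ + ν + 1) for t ≥ 0 (the Kilbas–Saigo function E_{ν, 1+γ/ν, γ/ν}(λ t^{ν+γ})). Then the series converges for all t ≥ 0, f(0) = 1, and f satisfies the fractional differential equation ᶜD₀₊^ν f(t) = λ t^γ f(t) for t > 0, where ᶜD₀₊^ν is the Caputo derivative of order ν. -/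
/-!
Write `μ = ν + γ` and `c_k` for the coefficients. By the Beta integral, the Caputo derivative
maps `t ^ (μ k)` to `Γ(μ k + 1) / Γ(μ k + 1 - ν) · t ^ (μ k - ν)`, and the coefficients satisfy
`c_k · Γ(μ k + 1) / Γ(μ k + 1 - ν) = c_{k-1}`, so the differentiated series is `λ t^γ f(t)`
term by term. Log-convexity of `Γ` gives `Γ(x) / Γ(x + ν) ≤ (x + ν - 1)^(-ν) → 0`, so `f` is an
entire power series in `λ t^μ`; this justifies differentiating and integrating term by term.
-/

open Real Finset Filter Topology MeasureTheory
open ProbabilityTheory (beta beta_pos)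

theorem Real.Gamma_le_Gamma_add_mul_rpow {x ν : ℝ} (hν0 : 0 < ν) (hν1 : ν < 1) (hx : 1 < x + ν) :
    Gamma x ≤ Gamma (x + ν) * (x + ν - 1) ^ (-ν) := by
  have hpos : 0 < x + ν - 1 := by linarith
  have hrec : Gamma (x + ν - 1) = Gamma (x + ν) / (x + ν - 1) := by
    rw [eq_div_iff hpos.ne', mul_comm, ← Gamma_add_one hpos.ne', sub_add_cancel]
  -- `x = (1 - ν) (x + ν) + ν (x + ν - 1)` and `Gamma` is log-convex.
  have hconv := Gamma_mul_add_mul_le_rpow_Gamma_mul_rpow_Gamma (s := x + ν) (by linarith) hpos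
    (sub_pos.2 hν1) hν0 (sub_add_cancel 1 ν)
  have hΓ := Gamma_pos_of_pos (show 0 < x + ν by linarith)
  rw [show (1 - ν) * (x + ν) + ν * (x + ν - 1) = x by ring, hrec,
    div_rpow hΓ.le hpos.le, ← mul_div_assoc, ← rpow_add hΓ, sub_add_cancel, rpow_one,
    div_eq_mul_inv, ← rpow_neg hpos.le] at hconv
  exact hconv

theorem Real.tendsto_Gamma_div_Gamma_add_atTop {ν : ℝ} (hν0 : 0 < ν) (hν1 : ν < 1) :
    Tendsto (fun x => Gamma x / Gamma (x + ν)) atTop (𝓝 0) := by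
  have hlim : Tendsto (fun x => (x + ν - 1) ^ (-ν)) atTop (𝓝 0) :=
    (tendsto_rpow_neg_atTop hν0).comp <|
      tendsto_atTop_add_const_right _ _ (tendsto_atTop_add_const_right _ _ tendsto_id)
  refine squeeze_zero' ?_ ?_ hlim
  · filter_upwards [eventually_gt_atTop 0] with x hx
    exact div_nonneg (Gamma_pos_of_pos hx).le (Gamma_pos_of_pos (by linarith)).le
  · filter_upwards [eventually_gt_atTop 1] with x hx
    rw [div_le_iff₀' (Gamma_pos_of_pos (by linarith))]
    exact Gamma_le_Gamma_add_mul_rpow hν0 hν1 (by linarith)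

theorem summable_pow_mul_of_tendsto_ratio_zero {c ρ : ℕ → ℝ} (hc : ∀ k, c (k + 1) = c k * ρ k)
    (hρ : Tendsto ρ atTop (𝓝 0)) (r : ℝ) : Summable fun k => r ^ k * c k := by
  have hsmall : ∀ᶠ k in atTop, |r| * |ρ k| ≤ 1 / 2 := by
    have := (hρ.abs.const_mul |r|).eventually (ge_mem_nhds (by norm_num : |r| * |(0:ℝ)| < 1 / 2))
    simpa using this
  refine summable_of_ratio_norm_eventually_le (by norm_num : (1 / 2 : ℝ) < 1) ?_
  filter_upwards [hsmall] with k hk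
  have hrk : ‖r ^ (k + 1) * c (k + 1)‖ = |r| * |ρ k| * ‖r ^ k * c k‖ := by
    rw [hc, pow_succ, Real.norm_eq_abs, Real.norm_eq_abs]
    simp only [abs_mul, abs_pow]
    ring
  rw [hrk]
  exact mul_le_mul_of_nonneg_right hk (norm_nonneg _)

theorem hasDerivAt_tsum_pow_mul {c : ℕ → ℝ} (hc : ∀ r, Summable fun k => r ^ k * c k) (z : ℝ) :
    HasDerivAt (fun z => ∑' k, z ^ k * c k) (∑' k : ℕ, ((k : ℝ) + 1) * z ^ k * c (k + 1)) z := by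
  set R := |z| + 1
  have hR : 1 ≤ R := by simp [R]
  have hbound : ∀ (k : ℕ) y, y ∈ Metric.ball (0 : ℝ) R →
      ‖k * y ^ (k - 1) * c k‖ ≤ |(2 * R) ^ k * c k| := by
    intro k y hy
    rw [mem_ball_zero_iff, Real.norm_eq_abs] at hy
    have hk : (k : ℝ) * R ^ (k - 1) ≤ (2 * R) ^ k := by
      rw [mul_pow]
      gcongr
      · exact_mod_cast (Nat.lt_two_pow_self).le
      · exact Nat.sub_le k 1
    rw [Real.norm_eq_abs, abs_mul, abs_mul, abs_pow, Nat.abs_cast, abs_mul (_ ^ k)]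
    gcongr
    calc (k : ℝ) * |y| ^ (k - 1) ≤ k * R ^ (k - 1) := by gcongr
      _ ≤ (2 * R) ^ k := hk
      _ = |(2 * R) ^ k| := (abs_of_nonneg (by positivity)).symm
  have hderiv := hasDerivAt_tsum_of_isPreconnected (hc (2 * R)).abs Metric.isOpen_ball
    (convex_ball 0 R).isPreconnected (fun k y _ => (hasDerivAt_pow k y).mul_const (c k)) hbound
    (Metric.mem_ball_self (by linarith)) (hc 0) (y := z) (by simp [R])
  have hsum : Summable fun k : ℕ => k * z ^ (k - 1) * c k :=
    (hc (2 * R)).abs.of_norm_bounded fun k => hbound k z (by simp [R])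
  rw [hsum.tsum_eq_zero_add] at hderiv
  simpa using hderiv

theorem integral_rpow_mul_sub_rpow {a b t : ℝ} (ha : 0 < a) (hb : 0 < b) (ht : 0 < t) :
    ∫ s in 0..t, s ^ (b - 1) * (t - s) ^ (a - 1) = beta b a * t ^ (b + a - 1) := by
  apply Complex.ofReal_injective
  have hint : ∫ s in 0..t, ((s ^ (b - 1) * (t - s) ^ (a - 1) : ℝ) : ℂ)
      = ∫ s in 0..t, (s : ℂ) ^ ((b : ℂ) - 1) * ((t : ℂ) - s) ^ ((a : ℂ) - 1) := by
    refine intervalIntegral.integral_congr fun s hs => ?_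
    rw [Set.uIcc_of_le ht.le] at hs
    simp only [Complex.ofReal_mul, Complex.ofReal_cpow hs.1,
      Complex.ofReal_cpow (sub_nonneg.2 hs.2)]
    push_cast
    rfl
  rw [← intervalIntegral.integral_ofReal, hint, Complex.betaIntegral_scaled _ _ ht,
    Complex.betaIntegral_eq_Gamma_mul_div _ _ (by simpa using hb) (by simpa using ha),
    beta]
  push_cast
  rw [Complex.ofReal_cpow ht.le, ← Complex.ofReal_add, Complex.Gamma_ofReal, Complex.Gamma_ofReal,
    Complex.Gamma_ofReal]
  push_cast
  ring

theorem integral_tsum_mul_rpow_mul_sub_rpow {a t : ℝ} (ha : 0 < a) (ht : 0 < t) {c b : ℕ → ℝ}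
    (hb : ∀ k, 0 < b k)
    (hsum : Summable fun k => |c k| * (beta (b k) a * t ^ (b k + a - 1))) :
    ∫ s in 0..t, ∑' k, c k * (s ^ (b k - 1) * (t - s) ^ (a - 1)) =
      ∑' k, c k * (beta (b k) a * t ^ (b k + a - 1)) := by
  have hpos : ∀ k, 0 < beta (b k) a * t ^ (b k + a - 1) := fun k =>
    mul_pos (beta_pos (hb k) ha) (rpow_pos_of_pos ht _)
  -- Each term is integrable because its integral is nonzero.
  have hint : ∀ k, IntegrableOn (fun s => s ^ (b k - 1) * (t - s) ^ (a - 1)) (Set.Ioc 0 t) :=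
    fun k => (intervalIntegrable_iff_integrableOn_Ioc_of_le ht.le).1 <|
      intervalIntegral.intervalIntegrable_of_integral_ne_zero <| by
      rw [integral_rpow_mul_sub_rpow ha (hb k) ht]
      exact (hpos k).ne'
  have hnorm : ∀ k, ∫ s in Set.Ioc 0 t, ‖c k * (s ^ (b k - 1) * (t - s) ^ (a - 1))‖ =
      |c k| * (beta (b k) a * t ^ (b k + a - 1)) := by
    intro k
    rw [← integral_rpow_mul_sub_rpow ha (hb k) ht, intervalIntegral.integral_of_le ht.le,
      ← integral_const_mul]
    refine setIntegral_congr_fun measurableSet_Ioc fun s hs => ?_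
    rw [norm_mul, Real.norm_eq_abs, Real.norm_of_nonneg (mul_nonneg (rpow_nonneg hs.1.le _)
      (rpow_nonneg (sub_nonneg.2 hs.2) _))]
  rw [intervalIntegral.integral_of_le ht.le, ← integral_tsum_of_summable_integral_norm
    (fun k => (hint k).const_mul (c k)) (hsum.congr fun k => (hnorm k).symm)]
  refine tsum_congr fun k => ?_
  rw [integral_const_mul, ← intervalIntegral.integral_of_le ht.le,
    integral_rpow_mul_sub_rpow ha (hb k) ht]

noncomputable def kilbasSaigoCoeff (ν γ : ℝ) (k : ℕ) : ℝ :=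
  ∏ j ∈ range k, Gamma (ν * j + γ * j + γ + 1) / Gamma (ν * j + γ * j + γ + ν + 1)

/-- `kilbasSaigo ν γ z = E_{ν, 1 + γ/ν, γ/ν}(z)`: for `α = ν`, `m = 1 + γ/ν`, `l = γ/ν` one has
`α (j m + l) = (ν + γ) j + γ`. -/
noncomputable def kilbasSaigo (ν γ z : ℝ) : ℝ := ∑' k, z ^ k * kilbasSaigoCoeff ν γ k

section KilbasSaigo

variable {ν γ : ℝ}

theorem kilbasSaigoCoeff_succ (k : ℕ) : kilbasSaigoCoeff ν γ (k + 1) =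
    kilbasSaigoCoeff ν γ k * (Gamma (ν * k + γ * k + γ + 1) / Gamma (ν * k + γ * k + γ + ν + 1)) :=
  prod_range_succ _ _

theorem tendsto_kilbasSaigoCoeff_succ_div (hν0 : 0 < ν) (hν1 : ν < 1) (hγ : -ν < γ) :
    Tendsto (fun k : ℕ => Gamma (ν * k + γ * k + γ + 1) / Gamma (ν * k + γ * k + γ + ν + 1))
      atTop (𝓝 0) := by
  have hx : Tendsto (fun k : ℕ => (ν + γ) * k + (γ + 1)) atTop atTop :=
    tendsto_atTop_add_const_right _ _
      (tendsto_natCast_atTop_atTop.const_mul_atTop (by linarith))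
  refine ((tendsto_Gamma_div_Gamma_add_atTop hν0 hν1).comp hx).congr fun k => ?_
  simp only [Function.comp_apply]
  ring_nf

theorem summable_pow_mul_kilbasSaigoCoeff (hν0 : 0 < ν) (hν1 : ν < 1) (hγ : -ν < γ) (r : ℝ) :
    Summable fun k => r ^ k * kilbasSaigoCoeff ν γ k :=
  summable_pow_mul_of_tendsto_ratio_zero kilbasSaigoCoeff_succ
    (tendsto_kilbasSaigoCoeff_succ_div hν0 hν1 hγ) r

theorem succ_mul_kilbasSaigoCoeff_succ_mul_beta (hν1 : ν < 1) (hγ : -ν < γ) (k : ℕ) :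
    (ν + γ) * (k + 1) * kilbasSaigoCoeff ν γ (k + 1) *
      beta ((ν + γ) * (k + 1)) (1 - ν) = Gamma (1 - ν) * kilbasSaigoCoeff ν γ k := by
  have hμ : 0 < ν + γ := by linarith
  have hb : 0 < (ν + γ) * (k + 1) := by positivity
  rw [kilbasSaigoCoeff_succ, beta,
    show ν * k + γ * k + γ + 1 = (ν + γ) * (k + 1) + (1 - ν) by ring,
    show ν * k + γ * k + γ + ν + 1 = (ν + γ) * (k + 1) + 1 by ring, Gamma_add_one hb.ne']
  have := (Gamma_pos_of_pos hb).ne'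
  have := (Gamma_pos_of_pos (show 0 < (ν + γ) * (k + 1) + (1 - ν) by linarith)).ne'
  field_simp [hμ.ne']

theorem hasDerivAt_kilbasSaigo_comp (hν0 : 0 < ν) (hν1 : ν < 1) (hγ : -ν < γ) (lam : ℝ) {s : ℝ}
    (hs : 0 < s) :
    HasDerivAt (fun s => kilbasSaigo ν γ (lam * s ^ (ν + γ)))
      ((∑' k : ℕ, ((k : ℝ) + 1) * (lam * s ^ (ν + γ)) ^ k * kilbasSaigoCoeff ν γ (k + 1)) *
        (lam * ((ν + γ) * s ^ (ν + γ - 1)))) s :=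
  (hasDerivAt_tsum_pow_mul (summable_pow_mul_kilbasSaigoCoeff hν0 hν1 hγ) _).comp s
    ((hasDerivAt_rpow_const (Or.inl hs.ne')).const_mul lam)

theorem integral_sub_rpow_mul_deriv_kilbasSaigo_comp (hν0 : 0 < ν) (hν1 : ν < 1) (hγ : -ν < γ)
    (lam : ℝ) {t : ℝ} (ht : 0 < t) :
    ∫ s in 0..t, (t - s) ^ (-ν) * deriv (fun s => kilbasSaigo ν γ (lam * s ^ (ν + γ))) s =
      Gamma (1 - ν) * (lam * t ^ γ * kilbasSaigo ν γ (lam * t ^ (ν + γ))) := by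
  set μ := ν + γ
  have hμ : 0 < μ := by linarith
  set A : ℕ → ℝ := fun k => μ * (k + 1) * kilbasSaigoCoeff ν γ (k + 1) * lam ^ (k + 1)
  set B : ℕ → ℝ := fun k => μ * (k + 1)
  have hB : ∀ k, 0 < B k := fun k => by positivity
  have hintegrand : ∀ s ∈ Set.Ioo 0 t, (t - s) ^ (-ν) *
      deriv (fun s => kilbasSaigo ν γ (lam * s ^ μ)) s =
      ∑' k, A k * (s ^ (B k - 1) * (t - s) ^ ((1 - ν) - 1)) := by
    intro s hs
    rw [(hasDerivAt_kilbasSaigo_comp hν0 hν1 hγ lam hs.1).deriv, ← tsum_mul_right, ← tsum_mul_left]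
    refine tsum_congr fun k => ?_
    rw [sub_sub_cancel_left, mul_pow, ← rpow_mul_natCast hs.1.le,
      show B k - 1 = μ * k + (μ - 1) by ring, rpow_add hs.1]
    ring
  have hterm : ∀ k, A k * (beta (B k) (1 - ν) * t ^ (B k + (1 - ν) - 1)) =
      Gamma (1 - ν) * (lam * t ^ γ) * ((lam * t ^ μ) ^ k * kilbasSaigoCoeff ν γ k) := by
    intro k
    rw [show B k + (1 - ν) - 1 = γ + μ * k by ring, rpow_add ht, rpow_mul_natCast ht.le]
    linear_combination (lam ^ (k + 1) * t ^ γ * (t ^ μ) ^ k) *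
      succ_mul_kilbasSaigoCoeff_succ_mul_beta hν1 hγ k
  have hsum : Summable fun k => |A k| *
      (beta (B k) (1 - ν) * t ^ (B k + (1 - ν) - 1)) :=
    ((summable_pow_mul_kilbasSaigoCoeff hν0 hν1 hγ (lam * t ^ μ)).mul_left _).abs.congr fun k => by
      rw [← hterm, abs_mul, abs_of_pos (mul_pos (beta_pos (hB k) (by linarith))
        (rpow_pos_of_pos ht _))]
  rw [intervalIntegral.integral_congr_uIoo (by rwa [Set.uIoo_of_le ht.le]),
    integral_tsum_mul_rpow_mul_sub_rpow (by linarith) ht hB hsum, tsum_congr hterm, tsum_mul_left,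
    mul_assoc]
  rfl

end KilbasSaigo

theorem stmt7 (ν γ lam : ℝ) (hν : ν ∈ Set.Ioo (0:ℝ) 1) (hγ : -ν < γ)
    (f : ℝ → ℝ)
    (hf : ∀ t : ℝ, f t = ∑' k : ℕ, (lam * t ^ (ν + γ)) ^ k *
        ∏ j ∈ Finset.range k,
          Real.Gamma (ν * j + γ * j + γ + 1) / Real.Gamma (ν * j + γ * j + γ + ν + 1)) :
    (∀ t : ℝ, 0 ≤ t → Summable (fun k : ℕ => (lam * t ^ (ν + γ)) ^ k *
        ∏ j ∈ Finset.range k,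
          Real.Gamma (ν * j + γ * j + γ + 1) / Real.Gamma (ν * j + γ * j + γ + ν + 1))) ∧
    f 0 = 1 ∧
    (∀ t : ℝ, 0 < t →
      (1 / Real.Gamma (1 - ν)) * ∫ s in (0:ℝ)..t, (t - s) ^ (-ν) * deriv f s =
        lam * t ^ γ * f t) := by
  obtain ⟨hν0, hν1⟩ := hν
  have hf' : f = fun t => kilbasSaigo ν γ (lam * t ^ (ν + γ)) := funext hf
  refine ⟨fun t _ => summable_pow_mul_kilbasSaigoCoeff hν0 hν1 hγ _, ?_, fun t ht => ?_⟩
  · simp only [hf', kilbasSaigo]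
    rw [zero_rpow (by linarith), mul_zero,
      tsum_eq_single 0 fun k hk => by rw [zero_pow hk, zero_mul]]
    simp [kilbasSaigoCoeff]
  · rw [hf', integral_sub_rpow_mul_deriv_kilbasSaigo_comp hν0 hν1 hγ lam ht,
      ← mul_assoc, one_div_mul_cancel (Gamma_pos_of_pos (by linarith)).ne', one_mul]
end

section
/- For α ∈ (0,1), H ∈ (0,1), and t > 0, define û(β,t) = E_α(-β² t^{2H α}/2^α), where E_α is the one-parameter Mittag–Leffler function. Then (2H)^α t^{-2Hα} I_{2H}^{0,-α} û(β,·)(t) = -H^α β² û(β,t) + (2H)^α t^{-2Hα}/Γ(1-α), where I_{2H}^{0,-α} acts termwise on the power series via I_{2H}^{0,-α} t^{2Hαk} = (Γ(αk+1)/Γ(αk+1-α)) t^{2Hαk}. -/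
/-! Shifting the summation index by one turns `Γ(αk + 1 - α)` into `Γ(αk + 1)`: the series is its
`k = 0` term `1 / Γ(1 - α)` plus `z` times the Mittag–Leffler series at `z = -β² t^(2Hα) / 2^α`, and
the prefactor `(2H)^α t^(-2Hα)` turns `z` into `-H^α β²`. The shift is legitimate because the
Mittag–Leffler series converges, by the bound `Γ(s) ≥ R^(s-1) e^(-R)` obtained by truncating Euler's
integral to `(R, ∞)`. -/

open Real

open MeasureTheory Set in
theorem Real.rpow_sub_one_mul_exp_neg_le_Gamma {R s : ℝ} (hR : 0 ≤ R) (hs : 1 ≤ s) :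
    R ^ (s - 1) * exp (-R) ≤ Gamma s := by
  have hint : IntegrableOn (fun x : ℝ => exp (-x) * x ^ (s - 1)) (Ioi 0) :=
    GammaIntegral_convergent (by linarith)
  calc R ^ (s - 1) * exp (-R) = ∫ x in Ioi R, R ^ (s - 1) * exp (-x) := by
        rw [integral_const_mul, integral_exp_neg_Ioi]
    _ ≤ ∫ x in Ioi R, exp (-x) * x ^ (s - 1) := by
        refine setIntegral_mono_on ((integrableOn_exp_neg_Ioi R).const_mul _)
          (hint.mono_set (Ioi_subset_Ioi hR)) measurableSet_Ioi fun x hx => ?_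
        rw [mul_comm]
        gcongr
        exact (mem_Ioi.mp hx).le
    _ ≤ ∫ x in Ioi 0, exp (-x) * x ^ (s - 1) :=
        setIntegral_mono_set hint
          (ae_restrict_of_forall_mem measurableSet_Ioi fun x (hx : 0 < x) => by positivity)
          (Ioi_subset_Ioi hR).eventuallyLE
    _ = Gamma s := (Gamma_eq_integral (by linarith)).symm

theorem summable_pow_div_Gamma_mul_add {α b : ℝ} (hα : 0 < α) (hb : 1 ≤ b) (z : ℝ) :
    Summable fun k : ℕ => z ^ k / Gamma (α * k + b) := by
  set q := 2 * |z| + 1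
  have hq : 1 ≤ q := le_add_of_nonneg_left (by positivity)
  -- `R` is chosen so that `R^(αk) = q^k`, making the series dominated by a geometric one.
  set R := q ^ (1 / α)
  have hR : 1 ≤ R := one_le_rpow hq (by positivity)
  have hΓ (k : ℕ) : q ^ k * exp (-R) ≤ Gamma (α * k + b) := by
    have hαk : 0 ≤ α * k := by positivity
    have hRq : R ^ (α * k) = q ^ k := by
      rw [← rpow_mul (by positivity), show 1 / α * (α * k) = k by field_simp, rpow_natCast]
    calc q ^ k * exp (-R) ≤ R ^ (α * k + b - 1) * exp (-R) := by
          gcongr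
          rw [← hRq]
          exact rpow_le_rpow_of_exponent_le hR (by linarith)
      _ ≤ Gamma (α * k + b) := rpow_sub_one_mul_exp_neg_le_Gamma (by positivity) (by linarith)
  have hgeom : Summable fun k : ℕ => exp R * (|z| / q) ^ k :=
    (summable_geometric_of_lt_one (by positivity)
      ((div_lt_one (by positivity)).mpr (by linarith [abs_nonneg z]))).mul_left _
  refine hgeom.of_norm_bounded fun k => ?_
  have hΓpos : 0 < Gamma (α * k + b) := lt_of_lt_of_le (by positivity) (hΓ k)
  calc ‖z ^ k / Gamma (α * k + b)‖ = |z| ^ k / Gamma (α * k + b) := by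
        rw [norm_div, norm_pow, norm_eq_abs, norm_of_nonneg hΓpos.le]
    _ ≤ |z| ^ k / (q ^ k * exp (-R)) := by gcongr; exact hΓ k
    _ = exp R * (|z| / q) ^ k := by rw [exp_neg, div_pow]; field_simp

theorem tsum_pow_div_Gamma_mul_add_one_sub {α : ℝ} (hα : 0 < α) (z : ℝ) :
    ∑' k : ℕ, z ^ k / Gamma (α * k + 1 - α) =
      1 / Gamma (1 - α) + z * ∑' k : ℕ, z ^ k / Gamma (α * k + 1) := by
  have hshift (k : ℕ) :
      z ^ (k + 1) / Gamma (α * ↑(k + 1) + 1 - α) = z * (z ^ k / Gamma (α * k + 1)) := by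
    rw [show α * ((k + 1 : ℕ) : ℝ) + 1 - α = α * k + 1 by push_cast; ring, pow_succ]
    ring
  have hsum : Summable fun k : ℕ => z ^ k / Gamma (α * k + 1 - α) := by
    refine (summable_nat_add_iff 1).mp ?_
    simpa only [hshift] using (summable_pow_div_Gamma_mul_add hα le_rfl z).mul_left z
  rw [hsum.tsum_eq_zero_add]
  simp only [hshift, tsum_mul_left, pow_zero, Nat.cast_zero, mul_zero, zero_add]

theorem stmt12 (α H β t : ℝ) (hα : α ∈ Set.Ioo (0:ℝ) 1) (hH : H ∈ Set.Ioo (0:ℝ) 1)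
    (ht : 0 < t) :
    (2 * H) ^ α * t ^ (-(2 * H * α)) *
        (∑' k : ℕ, (-(β ^ 2) / 2 ^ α) ^ k * t ^ (2 * H * α * k) /
          Real.Gamma (α * k + 1 - α)) =
      -(H ^ α) * β ^ 2 *
          (∑' k : ℕ, (-(β ^ 2) / 2 ^ α) ^ k * t ^ (2 * H * α * k) /
            Real.Gamma (α * k + 1)) +
        (2 * H) ^ α * t ^ (-(2 * H * α)) / Real.Gamma (1 - α) := by
  set z := -(β ^ 2) / 2 ^ α * t ^ (2 * H * α) with hz
  have hpow (k : ℕ) : (-(β ^ 2) / 2 ^ α) ^ k * t ^ (2 * H * α * k) = z ^ k := by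
    rw [mul_pow, ← rpow_natCast (t ^ _), ← rpow_mul ht.le]
  have hscale : (2 * H) ^ α * t ^ (-(2 * H * α)) * z = -(H ^ α) * β ^ 2 := by
    rw [hz, mul_rpow zero_le_two hH.1.le, rpow_neg ht.le]
    field_simp
  simp only [hpow, tsum_pow_div_Gamma_mul_add_one_sub hα.1]
  linear_combination (∑' k : ℕ, z ^ k / Gamma (α * k + 1)) * hscale
end

section
/- Let H ∈ (0,1), k ∈ ℕ with k > 2, and define for x, t > 0 the function u(x,t) = (1/(2^{1-1/k} t^{2H/k})) Σ_{n=0}^∞ (-1)^n 2^{n/k} x^n / (n! Γ(-n/k + 1 - 1/k) t^{2Hn/k}). Then u satisfies the higher-order heat equation with time-dependent coefficient: t^{1-2H} ∂u/∂t = (-1)^k H ∂^k u/∂x^k for all x > 0, t > 0. -/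
/-!
Put `a = 2H/k` and `W y = ∑ cₙ yⁿ`, where `cₙ = wrightCoeff k n`. Then
`u x t = 2^(1/k - 1) t^(-a) W (x t^(-a))`. Self-similarity turns the time derivative into the
Euler operator, `t^(1-2H) ∂ₜu = -a 2^(1/k - 1) t^(-2H-a) (W + y W') (y)`. Since `a k = 2H`, the
`k`-th space derivative is `∂ₓᵏu = 2^(1/k - 1) t^(-2H-a) W⁽ᵏ⁾ (y)`. So the equation reduces to the
ODE `(-1)^k W⁽ᵏ⁾ = -(2/k) (W + y W')`. On coefficients this is the recurrence
`(n+1)⋯(n+k) c_{n+k} = -(-1)^k (2/k) (n+1) cₙ`, which is `Γ(s+1) = s Γ(s)`. For `k ≥ 2` the same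
recurrence gives `|c_{n+k}| ≤ |cₙ| / (n+2)`, so `W` is entire and may be differentiated termwise.
-/

open Real Filter Topology FormalMultilinearSeries
open scoped NNReal Nat

theorem summable_of_ratio_add_eventually_le {f : ℕ → ℝ} {k : ℕ} [NeZero k] {r : ℝ}
    (hf : 0 ≤ f) (hr : r < 1) (h : ∀ᶠ n in atTop, f (n + k) ≤ r * f n) : Summable f := by
  -- the ordinary ratio test on each residue class modulo `k`
  let e : Fin k × ℕ ≃ ℕ := (Equiv.prodComm _ _).trans (Nat.divModEquiv k).symm
  rw [← e.summable_iff]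
  refine (summable_prod_of_nonneg fun _ => hf _).2 ?_
  refine ⟨fun i => summable_of_ratio_norm_eventually_le hr ?_, .of_finite⟩
  obtain ⟨N, hN⟩ := eventually_atTop.1 h
  filter_upwards [eventually_ge_atTop N] with j hj
  have hk : 1 ≤ k := NeZero.one_le
  simpa [e, Real.norm_of_nonneg (hf _), add_mul, add_right_comm] using
    hN (j * k + i) (by nlinarith)

def derivCoeff (c : ℕ → ℝ) (n : ℕ) : ℝ := (n + 1) * c (n + 1)

section EntirePowerSeries

variable {c : ℕ → ℝ}

theorem radius_ofScalars_eq_top_iff :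
    (ofScalars ℝ c).radius = ⊤ ↔ ∀ r : ℝ≥0, Summable fun n => ‖c n‖ * (r : ℝ) ^ n := by
  simp [radius_eq_top_iff_summable_norm]

theorem summable_mul_pow_of_radius_ofScalars_eq_top (hc : (ofScalars ℝ c).radius = ⊤)
    (y : ℝ) : Summable fun n => c n * y ^ n :=
  .of_norm <| by simpa [norm_pow] using radius_ofScalars_eq_top_iff.1 hc ‖y‖₊

theorem radius_ofScalars_derivCoeff (hc : (ofScalars ℝ c).radius = ⊤) :
    (ofScalars ℝ (derivCoeff c)).radius = ⊤ := by
  refine radius_ofScalars_eq_top_iff.2 fun r => ?_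
  set R : ℝ := 2 * r + 1
  have hR : 2 * (r : ℝ) ≤ R := by linarith
  have hsum :=
    (summable_nat_add_iff 1).2 (radius_ofScalars_eq_top_iff.1 hc ⟨R, by positivity⟩)
  refine .of_nonneg_of_le (fun n => by positivity) (fun n => ?_) hsum
  have hn : (n + 1 : ℝ) ≤ 2 ^ n := by exact_mod_cast Nat.lt_two_pow_self
  calc ‖derivCoeff c n‖ * (r : ℝ) ^ n = ‖c (n + 1)‖ * ((n + 1) * r ^ n) := by
        rw [derivCoeff, norm_mul, Real.norm_of_nonneg (by positivity)]; ring
    _ ≤ ‖c (n + 1)‖ * R ^ (n + 1) := by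
        gcongr
        calc (n + 1 : ℝ) * r ^ n ≤ 2 ^ n * r ^ n := by gcongr
          _ = (2 * r) ^ n := (mul_pow ..).symm
          _ ≤ R ^ n := by gcongr
          _ ≤ R ^ (n + 1) := pow_le_pow_right₀ (by linarith [r.2]) n.le_succ

theorem hasDerivAt_ofScalarsSum (hc : (ofScalars ℝ c).radius = ⊤) (y : ℝ) :
    HasDerivAt (ofScalarsSum c) (ofScalarsSum (derivCoeff c) y) y := by
  have hshift : ofScalarsSum (E := ℝ) c = fun z => c 0 + ∑' n, c (n + 1) * z ^ (n + 1) := by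
    funext z
    rw [ofScalars_sum_eq, Summable.tsum_eq_zero_add]
    · simp
    · simpa using summable_mul_pow_of_radius_ofScalars_eq_top hc z
  set R : ℝ := |y| + 1
  have hderiv (n : ℕ) (z : ℝ) :
      HasDerivAt (fun z => c (n + 1) * z ^ (n + 1)) (derivCoeff c n * z ^ n) z := by
    simpa [derivCoeff, mul_left_comm, mul_assoc] using
      (hasDerivAt_pow (n + 1) z).const_mul (c (n + 1))
  have htsum := hasDerivAt_tsum_of_isPreconnected (t := Metric.ball 0 R) (y₀ := 0) (y := y)
    (u := fun n => ‖derivCoeff c n * R ^ n‖)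
    ((summable_mul_pow_of_radius_ofScalars_eq_top (radius_ofScalars_derivCoeff hc) R).norm)
    Metric.isOpen_ball (convex_ball 0 R).isPreconnected (fun n z _ => hderiv n z)
    (fun n z hz => ?_) (Metric.mem_ball_self (by positivity)) (by simp) (by simp [R])
  · rw [hshift, ofScalars_sum_eq]
    simpa using htsum.const_add (c 0)
  · rw [norm_mul, norm_mul, norm_pow, norm_pow]
    gcongr
    simpa [R, abs_of_pos (by positivity : 0 < |y| + 1)] using (mem_ball_zero_iff.1 hz).le

theorem deriv_ofScalarsSum (hc : (ofScalars ℝ c).radius = ⊤) :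
    deriv (ofScalarsSum (E := ℝ) c) = ofScalarsSum (derivCoeff c) :=
  funext fun y => (hasDerivAt_ofScalarsSum hc y).deriv

theorem iteratedDeriv_ofScalarsSum (hc : (ofScalars ℝ c).radius = ⊤) (m : ℕ) :
    iteratedDeriv m (ofScalarsSum (E := ℝ) c) = ofScalarsSum (derivCoeff^[m] c) := by
  induction m generalizing c with
  | zero => rfl
  | succ m ih =>
    rw [iteratedDeriv_succ', deriv_ofScalarsSum hc, ih (radius_ofScalars_derivCoeff hc),
      Function.iterate_succ_apply]

theorem contDiff_ofScalarsSum (hc : (ofScalars ℝ c).radius = ⊤) {n : WithTop ℕ∞} :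
    ContDiff ℝ n (ofScalarsSum (E := ℝ) c) := by
  have := (ofScalars ℝ c).analyticOnNhd
  rw [hc, Metric.eball_top_eq_univ] at this
  exact this.contDiff

theorem ofScalarsSum_add_mul_ofScalarsSum_derivCoeff (hc : (ofScalars ℝ c).radius = ⊤)
    (y : ℝ) : ofScalarsSum c y + y * ofScalarsSum (derivCoeff c) y =
      ofScalarsSum (fun n => (n + 1) * c n) y := by
  have hsum := summable_mul_pow_of_radius_ofScalars_eq_top hc y
  have hderiv := summable_mul_pow_of_radius_ofScalars_eq_top (radius_ofScalars_derivCoeff hc) y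
  have hshift (n : ℕ) :
      ((n + 1 : ℕ) : ℝ) * c (n + 1) * y ^ (n + 1) = y * (derivCoeff c n * y ^ n) := by
    rw [derivCoeff]; push_cast; ring
  have heuler : Summable fun n : ℕ => n * c n * y ^ n :=
    (summable_nat_add_iff 1).1 (by simpa only [hshift] using hderiv.mul_left y)
  simp only [ofScalars_sum_eq, smul_eq_mul]
  have hzero := heuler.tsum_eq_zero_add
  rw [Nat.cast_zero, zero_mul, zero_mul, zero_add] at hzero
  rw [← tsum_mul_left, ← tsum_congr hshift, ← hzero, ← hsum.tsum_add heuler]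
  congr 1 with n
  ring

end EntirePowerSeries

theorem iterate_derivCoeff_apply (m : ℕ) (c : ℕ → ℝ) (n : ℕ) :
    derivCoeff^[m] c n = (n + 1).ascFactorial m * c (n + m) := by
  induction m generalizing n with
  | zero => simp
  | succ m ih =>
    rw [Function.iterate_succ_apply', derivCoeff, ih, Nat.ascFactorial_succ,
      ← Nat.succ_ascFactorial, add_right_comm n 1 m, add_assoc n m 1]
    push_cast
    ring

noncomputable def selfSimilar (a : ℝ) (W : ℝ → ℝ) (x t : ℝ) : ℝ := t ^ (-a) * W (x * t ^ (-a))

theorem hasDerivAt_selfSimilar {a x t : ℝ} {W : ℝ → ℝ} (ht : 0 < t)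
    (hW : DifferentiableAt ℝ W (x * t ^ (-a))) :
    HasDerivAt (selfSimilar a W x)
      (-a * t ^ (-a - 1) * (W (x * t ^ (-a)) + x * t ^ (-a) * deriv W (x * t ^ (-a)))) t := by
  have hpow : HasDerivAt (fun τ : ℝ => τ ^ (-a)) (-a * t ^ (-a - 1)) t :=
    hasDerivAt_rpow_const (Or.inl ht.ne')
  refine (hpow.mul (hW.hasDerivAt.comp t (hpow.const_mul x))).congr_deriv ?_
  simp only [Function.comp_apply]
  ring

theorem iteratedDeriv_selfSimilar {n : ℕ} {W : ℝ → ℝ} (hW : ContDiff ℝ n W) (a t x : ℝ) :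
    iteratedDeriv n (fun z => selfSimilar a W z t) x =
      t ^ (-a) * ((t ^ (-a)) ^ n * iteratedDeriv n W (x * t ^ (-a))) := by
  simp only [selfSimilar, mul_comm _ (t ^ (-a))]
  rw [iteratedDeriv_const_mul_field, iteratedDeriv_comp_const_mul hW]

theorem rpow_mul_deriv_selfSimilar {k : ℕ} (hk : k ≠ 0) (H : ℝ) {W : ℝ → ℝ}
    (hW : ContDiff ℝ k W)
    (hode : ∀ y, (-1) ^ k * iteratedDeriv k W y = -(2 / k) * (W y + y * deriv W y))
    {x t : ℝ} (ht : 0 < t) :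
    t ^ (1 - 2 * H) * deriv (selfSimilar (2 * H / k) W x) t =
      (-1) ^ k * H * iteratedDeriv k (fun z => selfSimilar (2 * H / k) W z t) x := by
  set a := 2 * H / k with ha
  set y := x * t ^ (-a)
  have hWy : DifferentiableAt ℝ W y := hW.differentiable (by exact_mod_cast hk) y
  have hpow : t ^ (1 - 2 * H) * t ^ (-a - 1) = t ^ (-a) * (t ^ (-a)) ^ k := by
    rw [← rpow_natCast, ← rpow_mul ht.le, ← rpow_add ht, ← rpow_add ht, ha]
    congr 1
    field_simp
    ring
  rw [(hasDerivAt_selfSimilar ht hWy).deriv, iteratedDeriv_selfSimilar hW]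
  linear_combination (-a) * (W y + y * deriv W y) * hpow - H * (t ^ (-a) * (t ^ (-a)) ^ k) * hode y

theorem Real.inv_Gamma_eq_mul_inv_Gamma_add_one (s : ℝ) :
    (Gamma s)⁻¹ = s * (Gamma (s + 1))⁻¹ := by
  rcases eq_or_ne s 0 with rfl | hs
  · simp [Gamma_zero]
  · rw [Gamma_add_one hs, mul_inv, ← mul_assoc, mul_inv_cancel₀ hs, one_mul]

-- `∑ wrightCoeff k n * yⁿ = W_{-1/k, 1-1/k} (-2^{1/k} y)`. At the poles of `Γ`, Mathlib's
-- `Γ = 0` and `0⁻¹ = 0` give the convention `1/Γ = 0`.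
noncomputable def wrightCoeff (k n : ℕ) : ℝ :=
  (-1) ^ n * 2 ^ ((n : ℝ) / k) / n ! * (Gamma (-(n : ℝ) / k + 1 - 1 / k))⁻¹

theorem iterate_derivCoeff_wrightCoeff {k : ℕ} (hk : k ≠ 0) (n : ℕ) :
    derivCoeff^[k] (wrightCoeff k) n = -(-1) ^ k * (2 / k) * (n + 1) * wrightCoeff k n := by
  have hk' : (k : ℝ) ≠ 0 := Nat.cast_ne_zero.2 hk
  have hGamma : -((n + k : ℕ) : ℝ) / k + 1 - 1 / k = -(n + 1) / k := by
    push_cast; field_simp; ring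
  have hGamma' : -(n : ℝ) / k + 1 - 1 / k = -(n + 1) / k + 1 := by
    field_simp; ring
  have hpow : (2 : ℝ) ^ (((n + k : ℕ) : ℝ) / k) = 2 * 2 ^ ((n : ℝ) / k) := by
    rw [Nat.cast_add, add_div, div_self hk', rpow_add two_pos, rpow_one, mul_comm]
  have hfact : ((n + k)! : ℝ) = n ! * (n + 1).ascFactorial k := by
    exact_mod_cast (Nat.factorial_mul_ascFactorial n k).symm
  have hA : ((n + 1).ascFactorial k : ℝ) ≠ 0 := by positivity
  rw [iterate_derivCoeff_apply, wrightCoeff, wrightCoeff, hGamma, hGamma', hpow, hfact,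
    Real.inv_Gamma_eq_mul_inv_Gamma_add_one (-(n + 1) / k), pow_add]
  field_simp

theorem norm_wrightCoeff_add_le {k : ℕ} (hk : 2 ≤ k) (n : ℕ) :
    ‖wrightCoeff k (n + k)‖ ≤ ‖wrightCoeff k n‖ / (n + 2) := by
  have hrec := congrArg norm (iterate_derivCoeff_wrightCoeff (by omega : k ≠ 0) n)
  rw [iterate_derivCoeff_apply] at hrec
  simp only [norm_mul, norm_neg, norm_pow, norm_one, one_pow, one_mul, Real.norm_natCast,
    Real.norm_of_nonneg (by positivity : (0 : ℝ) ≤ 2 / k),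
    Real.norm_of_nonneg (by positivity : (0 : ℝ) ≤ n + 1)] at hrec
  have hA : ((n + 1) * (n + 2) : ℝ) ≤ (n + 1).ascFactorial k := by
    have h : n ! * ((n + 1) * (n + 2)) ≤ n ! * (n + 1).ascFactorial k := by
      rw [Nat.factorial_mul_ascFactorial]
      calc n ! * ((n + 1) * (n + 2)) = (n + 2)! := by simp only [Nat.factorial_succ]; ring
        _ ≤ (n + k)! := Nat.factorial_le (by omega)
    exact_mod_cast Nat.le_of_mul_le_mul_left h (Nat.factorial_pos n)
  have hk' : (2 : ℝ) / k ≤ 1 := by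
    rw [div_le_one (by positivity)]; exact_mod_cast hk
  rw [le_div_iff₀ (by positivity)]
  have hn : (0 : ℝ) < n + 1 := by positivity
  refine le_of_mul_le_mul_right ?_ hn
  calc ‖wrightCoeff k (n + k)‖ * (n + 2) * (n + 1)
      = ‖wrightCoeff k (n + k)‖ * ((n + 1) * (n + 2)) := by ring
    _ ≤ ‖wrightCoeff k (n + k)‖ * (n + 1).ascFactorial k := by gcongr
    _ = 2 / k * (n + 1) * ‖wrightCoeff k n‖ := by rw [mul_comm, hrec]
    _ ≤ 1 * (n + 1) * ‖wrightCoeff k n‖ := by gcongr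
    _ = ‖wrightCoeff k n‖ * (n + 1) := by ring

theorem radius_ofScalars_wrightCoeff {k : ℕ} (hk : 2 ≤ k) :
    (ofScalars ℝ (wrightCoeff k)).radius = ⊤ := by
  have : NeZero k := ⟨by omega⟩
  refine radius_ofScalars_eq_top_iff.2 fun r =>
    summable_of_ratio_add_eventually_le (k := k) (r := 1 / 2) (fun n => by positivity)
      (by norm_num) ?_
  filter_upwards [eventually_ge_atTop ⌈2 * (r : ℝ) ^ k⌉₊] with n hn
  have hn' : 2 * (r : ℝ) ^ k ≤ n + 2 := by
    linarith [Nat.le_ceil (2 * (r : ℝ) ^ k), (Nat.cast_le (α := ℝ)).2 hn]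
  calc ‖wrightCoeff k (n + k)‖ * (r : ℝ) ^ (n + k)
      ≤ ‖wrightCoeff k n‖ / (n + 2) * (r : ℝ) ^ (n + k) := by
        gcongr; exact norm_wrightCoeff_add_le hk n
    _ = (r : ℝ) ^ k / (n + 2) * (‖wrightCoeff k n‖ * (r : ℝ) ^ n) := by ring
    _ ≤ 1 / 2 * (‖wrightCoeff k n‖ * (r : ℝ) ^ n) := by
        gcongr ?_ * _
        rw [div_le_iff₀ (by positivity)]
        linarith

theorem iteratedDeriv_ofScalarsSum_wrightCoeff {k : ℕ} (hk : 2 ≤ k) (y : ℝ) :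
    (-1) ^ k * iteratedDeriv k (ofScalarsSum (E := ℝ) (wrightCoeff k)) y =
      -(2 / k) * (ofScalarsSum (wrightCoeff k) y +
        y * deriv (ofScalarsSum (E := ℝ) (wrightCoeff k)) y) := by
  have hc := radius_ofScalars_wrightCoeff hk
  have hsq : ((-1 : ℝ) ^ k) * (-1) ^ k = 1 := by rw [← mul_pow]; norm_num
  rw [iteratedDeriv_ofScalarsSum hc, deriv_ofScalarsSum hc,
    ofScalarsSum_add_mul_ofScalarsSum_derivCoeff hc]
  simp only [ofScalars_sum_eq, smul_eq_mul, ← tsum_mul_left]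
  congr 1 with n
  rw [iterate_derivCoeff_wrightCoeff (by omega)]
  linear_combination (-(2 / k) * (n + 1) * wrightCoeff k n * y ^ n) * hsq

theorem heatSeries_eq_selfSimilar (k : ℕ) (H z : ℝ) {τ : ℝ} (hτ : 0 < τ) :
    (1 / (2 ^ (1 - 1 / (k:ℝ)) * τ ^ (2 * H / k))) *
        ∑' n : ℕ, (-1 : ℝ) ^ n * 2 ^ ((n : ℝ) / k) * z ^ n /
          ((n.factorial : ℝ) * Real.Gamma (-(n : ℝ) / k + 1 - 1 / k) * τ ^ (2 * H * n / k)) =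
      (2 ^ (1 - 1 / (k:ℝ)))⁻¹ * selfSimilar (2 * H / k) (ofScalarsSum (wrightCoeff k)) z τ := by
  have hterm (n : ℕ) : (τ ^ (-(2 * H / k))) ^ n = (τ ^ (2 * H * n / k))⁻¹ := by
    rw [← rpow_natCast, ← rpow_mul hτ.le, ← rpow_neg hτ.le]
    ring_nf
  rw [selfSimilar, one_div, mul_inv, ← rpow_neg hτ.le, mul_assoc, ofScalars_sum_eq]
  congr 2
  congr 1 with n
  rw [smul_eq_mul, wrightCoeff, mul_pow, hterm]
  field_simp

theorem stmt15_general (H : ℝ) (k : ℕ) (hk : 2 < k)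
    (u : ℝ → ℝ → ℝ)
    (hu : ∀ x t : ℝ, 0 < x → 0 < t →
      u x t = (1 / (2 ^ (1 - 1 / (k:ℝ)) * t ^ (2 * H / k))) *
        ∑' n : ℕ, (-1 : ℝ) ^ n * 2 ^ ((n : ℝ) / k) * x ^ n /
          ((n.factorial : ℝ) * Real.Gamma (-(n : ℝ) / k + 1 - 1 / k) * t ^ (2 * H * n / k))) :
    ∀ x t : ℝ, 0 < x → 0 < t →
      t ^ (1 - 2 * H) * deriv (fun τ => u x τ) t =
        (-1 : ℝ) ^ k * H * iteratedDeriv k (fun y => u y t) x := by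
  intro x t hx ht
  have hc := radius_ofScalars_wrightCoeff hk.le
  set B : ℝ := (2 ^ (1 - 1 / (k:ℝ)))⁻¹
  set W := ofScalarsSum (E := ℝ) (wrightCoeff k)
  have hu' (z τ : ℝ) (hz : 0 < z) (hτ : 0 < τ) : u z τ = B * selfSimilar (2 * H / k) W z τ :=
    (hu z τ hz hτ).trans (heatSeries_eq_selfSimilar k H z hτ)
  have htime : (fun τ => u x τ) =ᶠ[𝓝 t] fun τ => B * selfSimilar (2 * H / k) W x τ := by
    filter_upwards [Ioi_mem_nhds ht] with τ hτ using hu' x τ hx hτ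
  have hspace : (fun z => u z t) =ᶠ[𝓝 x] fun z => B * selfSimilar (2 * H / k) W z t := by
    filter_upwards [Ioi_mem_nhds hx] with z hz using hu' z t hz ht
  rw [htime.deriv_eq, hspace.iteratedDeriv_eq, deriv_const_mul_field',
    iteratedDeriv_const_mul_field]
  linear_combination B * rpow_mul_deriv_selfSimilar (by omega) H (contDiff_ofScalarsSum hc)
    (iteratedDeriv_ofScalarsSum_wrightCoeff hk.le) ht

theorem stmt15 (H : ℝ) (hH : H ∈ Set.Ioo (0:ℝ) 1) (k : ℕ) (hk : 2 < k)
    (u : ℝ → ℝ → ℝ)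
    (hu : ∀ x t : ℝ, 0 < x → 0 < t →
      u x t = (1 / (2 ^ (1 - 1 / (k:ℝ)) * t ^ (2 * H / k))) *
        ∑' n : ℕ, (-1 : ℝ) ^ n * 2 ^ ((n : ℝ) / k) * x ^ n /
          ((n.factorial : ℝ) * Real.Gamma (-(n : ℝ) / k + 1 - 1 / k) * t ^ (2 * H * n / k))) :
    ∀ x t : ℝ, 0 < x → 0 < t →
      t ^ (1 - 2 * H) * deriv (fun τ => u x τ) t =
        (-1 : ℝ) ^ k * H * iteratedDeriv k (fun y => u y t) x :=
  stmt15_general H k hk u hu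
end

section
/- For β ∈ ℝ and t > 0, with f(w) = e^{-w} w^{-3/4} for w > 0: the Kilbas–Saigo function E_{3/4, 1/3, -2/3}(-(1/4)β² t^{1/4}) = 1 + Σ_{k=1}^∞ (-β² t^{1/4}/4)^k ∏_{j=0}^{k-1} Γ(j/4+1/2)/Γ(j/4+5/4) admits the integral representation (Γ(3/4)/(π√2)) ∫_0^∞ e^{-w} w^{-3/4} exp(-β² (tw)^{1/4}) dw. -/
/-!
Expanding `exp (x w^p)` in its power series and integrating term by term against
`e^{-w} w^{s-1}` gives `∑ xᵏ/k! Γ(s + p k)`. The interchange is dominated convergence: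
by Young's inequality `|x| w^p ≤ w/2 + C` for `p < 1`, so the series of absolute values
is bounded by `e^C w^{s-1} e^{-w/2}`. For `p = s = 1/4` the Gamma-ratio product telescopes, via
`Γ(z + 1) = z Γ(z)`, to `4ᵏ Γ((k+1)/4) / (Γ(1/4) k!)`, and the reflection formula gives
`Γ(1/4) Γ(3/4) = π √2`.
-/

open Real Finset Nat MeasureTheory Set

lemma Gamma_one_fourth_mul_Gamma_three_fourths : Gamma (1 / 4) * Gamma (3 / 4) = π * √2 := by
  have h := Gamma_mul_Gamma_one_sub (1 / 4)
  rw [show (1 : ℝ) - 1 / 4 = 3 / 4 by norm_num, mul_one_div, sin_pi_div_four] at h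
  rw [h]
  have hs : √2 * √2 = 2 := Real.mul_self_sqrt (by norm_num)
  field_simp
  linarith

lemma prod_range_Gamma_div_Gamma_add_one {a : ℝ} (ha : 0 < a) (k : ℕ) :
    ∏ j ∈ range k, Gamma (a * (j + 2)) / Gamma (a * (j + 1) + 1) =
      Gamma (a * (k + 1)) / (Gamma a * a ^ k * k !) := by
  induction k with
  | zero => simp [(Gamma_pos_of_pos ha).ne']
  | succ k ih =>
    have hpos : 0 < a * (k + 1) := by positivity
    rw [prod_range_succ, ih, Gamma_add_one hpos.ne']
    have := (Gamma_pos_of_pos hpos).ne'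
    have := (Gamma_pos_of_pos ha).ne'
    push_cast [factorial_succ]
    field_simp
    ring_nf

lemma div_four_pow_mul_prod_range_Gamma_div_Gamma (y : ℝ) (k : ℕ) :
    (y / 4) ^ k * ∏ j ∈ range k, Gamma ((j : ℝ) / 4 + 1 / 2) / Gamma ((j : ℝ) / 4 + 5 / 4) =
      y ^ k / k ! * Gamma (1 / 4 + 1 / 4 * k) / Gamma (1 / 4) := by
  have hprod := prod_range_Gamma_div_Gamma_add_one (by norm_num : (0 : ℝ) < 1 / 4) k
  simp only [show ∀ j : ℝ, 1 / 4 * (j + 2) = j / 4 + 1 / 2 by intro; ring,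
    show ∀ j : ℝ, 1 / 4 * (j + 1) + 1 = j / 4 + 5 / 4 by intro; ring] at hprod
  have := (Gamma_pos_of_pos (by norm_num : (0 : ℝ) < 1 / 4)).ne'
  rw [hprod, div_pow, show (1 : ℝ) / 4 * (k + 1) = 1 / 4 + 1 / 4 * k by ring]
  field_simp
  rw [mul_assoc, ← mul_pow]
  norm_num

lemma exists_mul_rpow_le_half_add {p : ℝ} (hp0 : 0 < p) (hp1 : p < 1) (c : ℝ) :
    ∃ C, ∀ w, 0 ≤ w → c * w ^ p ≤ w / 2 + C := by
  refine ⟨(|c| * (2 * p) ^ p) ^ (1 - p)⁻¹ / (1 - p)⁻¹, fun w hw => ?_⟩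
  have hw' : 0 ≤ w / (2 * p) := by positivity
  have young := young_inequality_of_nonneg (a := |c| * (2 * p) ^ p) (b := (w / (2 * p)) ^ p)
    (by positivity) (by positivity) (Real.HolderConjugate.one_sub_inv_inv hp0 hp1)
  rw [← rpow_mul hw', mul_inv_cancel₀ hp0.ne', rpow_one, mul_assoc,
    ← mul_rpow (by positivity) hw', mul_div_cancel₀ _ (by positivity)] at young
  calc c * w ^ p ≤ |c| * w ^ p := by gcongr; exact le_abs_self c
    _ ≤ _ := young
    _ = _ := by field_simp; ring

lemma integrableOn_exp_neg_mul_rpow_mul_exp_mul_rpow {p s : ℝ} (hp0 : 0 < p) (hp1 : p < 1)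
    (hs : 0 < s) (c : ℝ) :
    IntegrableOn (fun w => exp (-w) * w ^ (s - 1) * exp (c * w ^ p)) (Ioi 0) := by
  obtain ⟨C, hC⟩ := exists_mul_rpow_le_half_add hp0 hp1 c
  have hG := (integrableOn_rpow_mul_exp_neg_mul_rpow (s := s - 1) (by linarith) zero_lt_one
    (by norm_num : (0 : ℝ) < 1 / 2)).const_mul (exp C)
  refine hG.mono' (by fun_prop) (ae_restrict_of_forall_mem measurableSet_Ioi ?_)
  intro w (hw : 0 < w)
  have hexp : exp (-w) * exp (c * w ^ p) ≤ exp C * exp (-(1 / 2) * w) := by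
    rw [← exp_add, ← exp_add, exp_le_exp]
    linarith [hC w hw.le]
  rw [norm_of_nonneg (by positivity), rpow_one]
  calc exp (-w) * w ^ (s - 1) * exp (c * w ^ p)
      = (exp (-w) * exp (c * w ^ p)) * w ^ (s - 1) := by ring
    _ ≤ (exp C * exp (-(1 / 2) * w)) * w ^ (s - 1) := by gcongr
    _ = _ := by ring

lemma hasSum_pow_div_factorial_mul_exp_neg_mul_rpow {p s w : ℝ} (hw : 0 < w) (x : ℝ) :
    HasSum (fun k : ℕ => x ^ k / k ! * (exp (-w) * w ^ (s + p * k - 1)))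
      (exp (-w) * w ^ (s - 1) * exp (x * w ^ p)) := by
  have hpow (k : ℕ) : w ^ (s + p * k - 1) = w ^ (s - 1) * (w ^ p) ^ k := by
    rw [← rpow_natCast, ← rpow_mul hw.le, ← rpow_add hw]
    ring_nf
  have hexp := (NormedSpace.expSeries_div_hasSum_exp (x * w ^ p)).mul_left (exp (-w) * w ^ (s - 1))
  rw [← exp_eq_exp_ℝ] at hexp
  refine hexp.congr_fun fun k => ?_
  rw [hpow, mul_pow]
  ring

theorem hasSum_pow_div_factorial_mul_Gamma {p s : ℝ} (hp0 : 0 < p) (hp1 : p < 1) (hs : 0 < s)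
    (x : ℝ) :
    HasSum (fun k : ℕ => x ^ k / k ! * Gamma (s + p * k))
      (∫ w in Ioi 0, exp (-w) * w ^ (s - 1) * exp (x * w ^ p)) := by
  have hGamma (k : ℕ) : Gamma (s + p * k) = ∫ w in Ioi 0, exp (-w) * w ^ (s + p * k - 1) :=
    Gamma_eq_integral (by positivity)
  simp_rw [hGamma, ← integral_const_mul]
  refine hasSum_integral_of_dominated_convergence
    (fun k w => |x| ^ k / k ! * (exp (-w) * w ^ (s + p * k - 1))) (fun k => by fun_prop) ?_ ?_ ?_ ?_
  · refine fun k => ae_restrict_of_forall_mem measurableSet_Ioi fun w (hw : 0 < w) => ?_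
    rw [norm_mul, norm_div, norm_pow, Real.norm_eq_abs, norm_natCast,
      norm_of_nonneg (by positivity)]
  · exact ae_restrict_of_forall_mem measurableSet_Ioi
      fun w hw => (hasSum_pow_div_factorial_mul_exp_neg_mul_rpow hw |x|).summable
  · refine (integrableOn_exp_neg_mul_rpow_mul_exp_mul_rpow hp0 hp1 hs |x|).congr
      (ae_restrict_of_forall_mem measurableSet_Ioi fun w hw => ?_)
    exact (hasSum_pow_div_factorial_mul_exp_neg_mul_rpow hw |x|).tsum_eq.symm
  · exact ae_restrict_of_forall_mem measurableSet_Ioi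
      fun w hw => hasSum_pow_div_factorial_mul_exp_neg_mul_rpow hw x

theorem stmt18 (β t : ℝ) (ht : 0 < t) :
    (∑' k : ℕ, (-(β ^ 2) * t ^ ((1:ℝ)/4) / 4) ^ k *
        ∏ j ∈ Finset.range k,
          Real.Gamma ((j:ℝ) / 4 + 1 / 2) / Real.Gamma ((j:ℝ) / 4 + 5 / 4)) =
      (Real.Gamma (3 / 4) / (π * Real.sqrt 2)) *
        ∫ w in Set.Ioi (0:ℝ),
          Real.exp (-w) * w ^ (-(3:ℝ)/4) * Real.exp (-(β ^ 2) * (t * w) ^ ((1:ℝ)/4)) := by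
  have hintegrand : ∀ w ∈ Ioi (0 : ℝ), exp (-w) * w ^ (-(3 : ℝ) / 4) *
      exp (-(β ^ 2) * (t * w) ^ ((1 : ℝ) / 4)) =
        exp (-w) * w ^ ((1 : ℝ) / 4 - 1) *
          exp (-(β ^ 2) * t ^ ((1 : ℝ) / 4) * w ^ ((1 : ℝ) / 4)) := by
    intro w (hw : 0 < w)
    rw [mul_rpow ht.le hw.le]
    ring_nf
  have hsum := (hasSum_pow_div_factorial_mul_Gamma (p := 1 / 4) (s := 1 / 4) (by norm_num)
    (by norm_num) (by norm_num) (-(β ^ 2) * t ^ ((1 : ℝ) / 4))).div_const (Gamma (1 / 4))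
  simp_rw [div_four_pow_mul_prod_range_Gamma_div_Gamma, hsum.tsum_eq,
    setIntegral_congr_fun measurableSet_Ioi hintegrand]
  have := (Gamma_pos_of_pos (by norm_num : (0 : ℝ) < 1 / 4)).ne'
  rw [← Gamma_one_fourth_mul_Gamma_three_fourths]
  field_simp
end
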